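/- arXiv:1902.02736 — 2 statements merged into one kernel-verified Lean document; each statement's English description precedes it below -/
import Mathlib

section
/- Fix a C-sequence ⟨C_α | α < ω₁⟩ on ω₁ satisfying (⋆). Then ρ₂ is nontrivial modulo locally constant: there exists no function ρ̃₂ : ω₁ → ℤ such that for every β < ω₁ the function α ↦ ρ̃₂(α) − ρ₂(α,β) is locally constant with respect to the order topology on β. -/
noncomputable section
open Ordinal Set

/-- The first uncountable ordinal `ω₁`. -/
def omega1 : Ordinal.{0} := (Cardinal.aleph 1).ord

/-- `IsOtp s o`: the set of ordinals `s` has order type `o`. -/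
def IsOtp (s : Set Ordinal.{0}) (o : Ordinal.{0}) : Prop :=
  Nonempty (s ≃o Set.Iio o)

/-- A C-sequence on `ω₁`: each `C α` is a cofinal subset of `α` (in particular `C 0 = ∅`). -/
def IsCSequence (C : Ordinal.{0} → Set Ordinal.{0}) : Prop :=
  ∀ α, α < omega1 → (∀ ξ ∈ C α, ξ < α) ∧ (∀ ξ, ξ < α → ∃ η ∈ C α, ξ ≤ η)

/-- The condition `(⋆)`: `otp (C α) = cf (α)` for all `α < ω₁`. -/
def StarProperty (C : Ordinal.{0} → Set Ordinal.{0}) : Prop :=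
  ∀ α, α < omega1 → IsOtp (C α) (Ordinal.cof α).ord

/-- `Tr` is the upper trace function of the walk along the C-sequence `C`:
`Tr α α = {α}` and `Tr α β = {β} ∪ Tr α (min (C β \ α))` for `α < β < ω₁`. -/
def IsUpperTrace (C : Ordinal.{0} → Set Ordinal.{0})
    (Tr : Ordinal.{0} → Ordinal.{0} → Finset Ordinal.{0}) : Prop :=
  (∀ α, Tr α α = {α}) ∧
  ∀ α β, α < β → β < omega1 → Tr α β = insert β (Tr α (sInf (C β \ Set.Iio α)))

/-- `IsRho1 C Tr rho1`: `rho1 α β` is the maximum weight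
`max {otp (C ξ ∩ α) | ξ ∈ Tr α β \ {α}}`, a natural number under `(⋆)`. -/
def IsRho1 (C : Ordinal.{0} → Set Ordinal.{0})
    (Tr : Ordinal.{0} → Ordinal.{0} → Finset Ordinal.{0})
    (rho1 : Ordinal.{0} → Ordinal.{0} → ℕ) : Prop :=
  ∀ α β, α < β → β < omega1 →
    IsGreatest {o : Ordinal | ∃ ξ ∈ Tr α β, ξ ≠ α ∧ IsOtp (C ξ ∩ Set.Iio α) o}
      (rho1 α β)

/-- The number-of-steps function `ρ₂ (α, β) = |Tr (α, β)|`, as an integer. -/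
def rho2 (Tr : Ordinal.{0} → Ordinal.{0} → Finset Ordinal.{0}) (α β : Ordinal.{0}) : ℤ :=
  (Tr α β).card

/-!
By `(⋆)`, `C (α + 1) = {α}`, so `ρ₂ (ζ, α + 1) = ρ₂ (ζ, α) + 1` for `ζ ≤ α`. Given `f`, local
constancy of `f - ρ₂ (·, α + 1)` at a limit `α` yields `γ_α < α` with
`f ζ = f α + ρ₂ (ζ, α) - 1 > f α` on `(γ_α, α)`, since `ρ₂ (ζ, α) ≥ 2`. The map `α ↦ γ_α` is
regressive, so some `ξ` bounds it on an unbounded set `S` of limits above `ξ`, and `f` is then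
strictly decreasing on `S`. But `S` contains an `ω`-sequence together with an element above it,
and `f` would send the sequence injectively into a bounded interval of `ℤ`.
-/

open Order

lemma omega1_eq_omega_one : omega1 = ω₁ := Cardinal.ord_aleph 1

lemma omega1_pos : 0 < omega1 := omega1_eq_omega_one ▸ omega_pos 1

lemma add_one_lt_omega1 {α : Ordinal} (h : α < omega1) : α + 1 < omega1 := by
  rw [omega1_eq_omega_one] at *
  simpa only [succ_eq_add_one] using (Cardinal.isSuccLimit_omega 1).succ_lt h

lemma iSup_lt_omega1 {s : ℕ → Ordinal} (h : ∀ n, s n < omega1) : ⨆ n, s n < omega1 := by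
  rw [omega1_eq_omega_one] at *
  exact Ordinal.iSup_lt_omega_one h

lemma isSuccLimit_iSup_of_strictMono {s : ℕ → Ordinal} (hs : StrictMono s) :
    IsSuccLimit (⨆ n, s n) := by
  by_contra h
  obtain ⟨n, hn⟩ := exists_eq_ciSup_of_not_isSuccLimit Ordinal.bddAbove_of_small h
  exact (hs n.lt_succ_self).not_ge (hn ▸ Ordinal.le_iSup s (n + 1))

lemma exists_strictMono_seq_lt_omega1 {r : Ordinal → Ordinal → Prop}
    (hr : ∀ β < omega1, ∃ α < omega1, β < α ∧ r β α) {a : Ordinal} (ha : a < omega1) :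
    ∃ s : ℕ → Ordinal, s 0 = a ∧ StrictMono s ∧ (∀ n, s n < omega1) ∧
      ∀ n, r (s n) (s (n + 1)) := by
  choose! g hg using hr
  have hlt : ∀ n, g^[n] a < omega1 := by
    intro n
    induction n with
    | zero => exact ha
    | succ n ih => rw [Function.iterate_succ_apply']; exact (hg _ ih).1
  refine ⟨fun n => g^[n] a, rfl, strictMono_nat_of_lt_succ fun n => ?_, hlt, fun n => ?_⟩ <;>
    simp only [Function.iterate_succ_apply']
  exacts [(hg _ (hlt n)).2.1, (hg _ (hlt n)).2.2]

theorem exists_regressive_le_unbounded (γ : Ordinal → Ordinal)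
    (hγ : ∀ α < omega1, IsSuccLimit α → γ α < α) :
    ∃ ξ < omega1, ∀ β < omega1, ∃ α < omega1, β < α ∧ IsSuccLimit α ∧ γ α ≤ ξ := by
  by_contra! hB
  -- Iterating the bounds `β` of `hB` gives a limit `L` with `γ L < s n ≤ γ L` for some `n`.
  have hr : ∀ ξ < omega1, ∃ η < omega1, ξ < η ∧
      ∀ α < omega1, η ≤ α → IsSuccLimit α → ξ < γ α := by
    intro ξ hξ
    obtain ⟨β, hβ, hβγ⟩ := hB ξ hξ
    refine ⟨max ξ β + 1, add_one_lt_omega1 (max_lt hξ hβ),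
      (le_max_left ξ β).trans_lt (lt_add_one _), fun α hα hle hlim => hβγ α hα ?_ hlim⟩
    exact (le_max_right ξ β).trans_lt ((lt_add_one _).trans_le hle)
  obtain ⟨s, -, hs, hs_lt, hs_bound⟩ :=
    exists_strictMono_seq_lt_omega1 hr omega1_pos
  have hL := iSup_lt_omega1 hs_lt
  have hLlim := isSuccLimit_iSup_of_strictMono hs
  obtain ⟨n, hn⟩ := Ordinal.lt_iSup_iff.1 (hγ _ hL hLlim)
  exact (hs_bound n _ hL (Ordinal.le_iSup s (n + 1)) hLlim).not_gt hn

theorem not_strictAntiOn_of_forall_exists_gt {S : Set Ordinal}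
    (hS : ∀ β < omega1, ∃ α ∈ S, α < omega1 ∧ β < α) (f : Ordinal → ℤ) : ¬ StrictAntiOn f S := by
  intro hf
  obtain ⟨a, haS, ha, -⟩ := hS 0 omega1_pos
  obtain ⟨s, hs0, hs, hs_lt, hsS⟩ := exists_strictMono_seq_lt_omega1 (r := fun _ α => α ∈ S)
    (fun β hβ => (hS β hβ).imp fun _ ⟨h1, h2, h3⟩ => ⟨h2, h3, h1⟩) ha
  have hsS' : ∀ n, s n ∈ S := by
    rintro (_ | n)
    exacts [hs0 ▸ haS, hsS n]
  obtain ⟨ε, hεS, -, hε⟩ := hS _ (iSup_lt_omega1 hs_lt)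
  have hmaps : range (f ∘ s) ⊆ Icc (f ε) (f (s 0)) := by
    rintro _ ⟨n, rfl⟩
    exact ⟨(hf (hsS' n) hεS ((Ordinal.le_iSup s n).trans_lt hε)).le,
      hf.antitoneOn (hsS' 0) (hsS' n) (hs.monotone n.zero_le)⟩
  have hanti : StrictAnti (f ∘ s) := fun m n hmn => hf (hsS' m) (hsS' n) (hs hmn)
  exact infinite_range_of_injective hanti.injective ((finite_Icc _ _).subset hmaps)

theorem not_forall_isSuccLimit_exists_Ioo_lt (f : Ordinal → ℤ) :
    ¬ ∀ α < omega1, IsSuccLimit α → ∃ γ < α, ∀ ζ ∈ Ioo γ α, f α < f ζ := by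
  intro h
  choose! γ hγ hf using h
  obtain ⟨ξ, hξ, hξS⟩ := exists_regressive_le_unbounded γ hγ
  refine not_strictAntiOn_of_forall_exists_gt
    (S := {α | α < omega1 ∧ IsSuccLimit α ∧ ξ < α ∧ γ α ≤ ξ}) ?_ f ?_
  · intro β hβ
    obtain ⟨α, hα, hβα, hlim, hγα⟩ := hξS (max β ξ) (max_lt hβ hξ)
    exact ⟨α, ⟨hα, hlim, (le_max_right β ξ).trans_lt hβα, hγα⟩, hα,
      (le_max_left β ξ).trans_lt hβα⟩
  · rintro a ⟨-, -, hξa, -⟩ b ⟨hb, hblim, -, hγb⟩ hab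
    exact hf b hb hblim a ⟨hγb.trans_lt hξa, hab⟩

theorem IsLocallyConstant.exists_forall_Ioo_eq {X : Type*} {α β : Ordinal} {g : Iio β → X}
    (hg : IsLocallyConstant g) (hα : α < β) (hlim : IsSuccLimit α) :
    ∃ γ < α, ∀ ζ (hζ : ζ ∈ Ioo γ α), g ⟨ζ, hζ.2.trans hα⟩ = g ⟨α, hα⟩ := by
  obtain ⟨U, hU, hUeq⟩ := isOpen_induced_iff.1 (hg.isOpen_fiber (g ⟨α, hα⟩))
  have hαU : α ∈ U := (hUeq.symm ▸ rfl : (⟨α, hα⟩ : Iio β) ∈ Subtype.val ⁻¹' U)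
  obtain ⟨γ, hγ, hsub⟩ := SuccOrder.isOpen_iff.1 hU α hαU hlim
  exact ⟨γ, hγ, fun ζ hζ => (Set.ext_iff.1 hUeq ⟨ζ, hζ.2.trans hα⟩).1 (hsub hζ)⟩

section Walks

variable {C : Ordinal → Set Ordinal} {Tr : Ordinal → Ordinal → Finset Ordinal}

lemma IsCSequence.sInf_diff_Iio_mem_Ico (hC : IsCSequence C) {a b : Ordinal} (hab : a < b)
    (hb : b < omega1) : sInf (C b \ Iio a) ∈ Ico a b := by
  obtain ⟨η, hη, haη⟩ := (hC b hb).2 a hab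
  have hmem := csInf_mem (s := C b \ Iio a) ⟨η, hη, not_lt.2 haη⟩
  exact ⟨not_lt.1 hmem.2, (hC b hb).1 _ hmem.1⟩

lemma IsUpperTrace.mem_self (hTr : IsUpperTrace C Tr) {a b : Ordinal} (hab : a ≤ b)
    (hb : b < omega1) : b ∈ Tr a b := by
  rcases hab.eq_or_lt with rfl | hab
  · simp [hTr.1]
  · simp [hTr.2 a b hab hb]

lemma IsUpperTrace.le_of_mem (hC : IsCSequence C) (hTr : IsUpperTrace C Tr) {a b x : Ordinal}
    (hab : a ≤ b) (hb : b < omega1) (hx : x ∈ Tr a b) : x ≤ b := by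
  induction b using WellFoundedLT.induction generalizing x with
  | _ b ih =>
    rcases hab.eq_or_lt with rfl | hab
    · simp_all [hTr.1]
    · rw [hTr.2 a b hab hb, Finset.mem_insert] at hx
      obtain ⟨h1, h2⟩ := hC.sInf_diff_Iio_mem_Ico hab hb
      rcases hx with rfl | hx
      · exact le_rfl
      · exact (ih _ h2 h1 (h2.trans hb) hx).trans h2.le

lemma rho2_self (hTr : IsUpperTrace C Tr) (a : Ordinal) : rho2 Tr a a = 1 := by
  simp [rho2, hTr.1]

lemma one_le_rho2 (hTr : IsUpperTrace C Tr) {a b : Ordinal} (hab : a ≤ b) (hb : b < omega1) :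
    1 ≤ rho2 Tr a b := by
  unfold rho2
  exact_mod_cast Finset.card_pos.2 ⟨b, hTr.mem_self hab hb⟩

lemma rho2_eq_rho2_sInf_add_one (hC : IsCSequence C) (hTr : IsUpperTrace C Tr) {a b : Ordinal}
    (hab : a < b) (hb : b < omega1) :
    rho2 Tr a b = rho2 Tr a (sInf (C b \ Iio a)) + 1 := by
  obtain ⟨h1, h2⟩ := hC.sInf_diff_Iio_mem_Ico hab hb
  have hnot : b ∉ Tr a (sInf (C b \ Iio a)) := fun hmem =>
    h2.not_ge (hTr.le_of_mem hC h1 (h2.trans hb) hmem)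
  rw [rho2, rho2, hTr.2 a b hab hb, Finset.card_insert_of_notMem hnot, Nat.cast_succ]

lemma two_le_rho2 (hC : IsCSequence C) (hTr : IsUpperTrace C Tr) {a b : Ordinal}
    (hab : a < b) (hb : b < omega1) : 2 ≤ rho2 Tr a b := by
  obtain ⟨h1, h2⟩ := hC.sInf_diff_Iio_mem_Ico hab hb
  have := one_le_rho2 hTr h1 (h2.trans hb)
  rw [rho2_eq_rho2_sInf_add_one hC hTr hab hb]
  omega

lemma StarProperty.C_add_one (hC : IsCSequence C) (hstar : StarProperty C) {α : Ordinal}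
    (h : α + 1 < omega1) : C (α + 1) = {α} := by
  obtain ⟨e⟩ := hstar (α + 1) h
  rw [cof_add_one, Cardinal.ord_one] at e
  have hsub : (C (α + 1)).Subsingleton := fun x hx y hy =>
    congrArg Subtype.val (e.injective (Subsingleton.elim (e ⟨x, hx⟩) (e ⟨y, hy⟩)))
  obtain ⟨η, hη, hαη⟩ := (hC (α + 1) h).2 α (lt_add_one α)
  have hηα : η = α := le_antisymm (lt_add_one_iff.1 ((hC (α + 1) h).1 η hη)) hαη
  exact hsub.eq_singleton_of_mem (hηα ▸ hη)

lemma rho2_add_one (hC : IsCSequence C) (hstar : StarProperty C) (hTr : IsUpperTrace C Tr)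
    {ζ α : Ordinal} (hζ : ζ ≤ α) (h : α + 1 < omega1) :
    rho2 Tr ζ (α + 1) = rho2 Tr ζ α + 1 := by
  have hnext : sInf (C (α + 1) \ Iio ζ) = α := by
    have hdiff : ({α} : Set Ordinal) \ Iio ζ = {α} := by simpa using hζ
    rw [hstar.C_add_one hC h, hdiff, csInf_singleton]
  rw [rho2_eq_rho2_sInf_add_one hC hTr (hζ.trans_lt (lt_add_one α)) h, hnext]

end Walks

/-- Theorem (nontriviality of ρ₂ modulo locally constant): for a C-sequence on ω₁ satisfying
(⋆), there is no `ρ̃₂ : ω₁ → ℤ` such that `ρ̃₂ - ρ₂(·,β)` is locally constant on `β`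
(with the order topology) for every `β < ω₁`. -/
theorem statement6 (C : Ordinal → Set Ordinal) (hC : IsCSequence C) (hstar : StarProperty C)
    (Tr : Ordinal → Ordinal → Finset Ordinal) (hTr : IsUpperTrace C Tr) :
    ¬∃ f : Ordinal → ℤ, ∀ β, β < omega1 →
      IsLocallyConstant (fun α : Set.Iio β => f α.1 - rho2 Tr α.1 β) := by
  rintro ⟨f, hf⟩
  refine not_forall_isSuccLimit_exists_Ioo_lt f fun α hα hlim => ?_
  have hα1 := add_one_lt_omega1 hα
  obtain ⟨γ, hγ, heq⟩ := (hf (α + 1) hα1).exists_forall_Ioo_eq (lt_add_one α) hlim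
  refine ⟨γ, hγ, fun ζ hζ => ?_⟩
  have hstep := heq ζ hζ
  simp only [rho2_add_one hC hstar hTr hζ.2.le hα1, rho2_add_one hC hstar hTr le_rfl hα1,
    rho2_self hTr] at hstep
  linarith [two_le_rho2 hC hTr hζ.2 hα]
end
end

section
/- Fix a C-sequence ⟨C_α | α < ω₁⟩ on ω₁ satisfying (⋆) and let i ∈ {1,2}. The tree T(ρ_i) = {ρ_i(·,β)↾α : α ≤ β < ω₁} of restrictions of the functions ρ_i(·,β) : β → ℤ, partially ordered by function extension, is an Aronszajn tree: for every α < ω₁ there is an element of T(ρ_i) with domain α; for every α < ω₁ the level {t ∈ T(ρ_i) : dom(t) = α} is countable; and T(ρ_i) has no uncountable chain. -/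
noncomputable section
open Ordinal Set

/-- The tree `T(ρ)` of restrictions `ρ(·,β) ↾ α` for `α ≤ β < ω₁`: an element with domain
`α` is coded as the pair `(α, f)` where `f` agrees with `ρ(·,β)` below `α` and is `0` above. -/
def treeT (rho : Ordinal.{0} → Ordinal.{0} → ℤ) : Set (Ordinal.{0} × (Ordinal.{0} → ℤ)) :=
  {p | ∃ β, p.1 ≤ β ∧ β < omega1 ∧ p.2 = fun ξ => if ξ < p.1 then rho ξ β else 0}

/-- The extension (tree) order on coded partial functions. -/
def treeLE (p q : Ordinal.{0} × (Ordinal.{0} → ℤ)) : Prop :=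
  p.1 ≤ q.1 ∧ ∀ ξ, ξ < p.1 → p.2 ξ = q.2 ξ

/-!
Both characteristics are coherent along walks. Under `(⋆)` each `C η` has order type at most `ω`,
so for `α < β` only finitely many points of the sets `C η` met by the walk from `β` to `α` lie
below `α`; for `ξ < α` above all of them the walk from `β` to `ξ` passes through `α`, whence
`ρ₁(ξ, β) = max (ρ₁(α, β), ρ₁(ξ, α))` and `ρ₂(ξ, β) = ρ₂(ξ, α) + ρ₂(α, β) - 1`. This makes the
levels countable, by induction on `α`.

An uncountable chain yields a branch `b` with `b ↾ α = ρ(·, β_α) ↾ α` for all `α < ω₁`. For `ρ₁`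
this is impossible because `ρ₁(·, β)` is finite-to-one, which makes `b` countable-to-one on `ω₁`.
For `ρ₂` the coherence shows that `d(α) = ρ₂(α, β_α)` is well defined at limits `α` and satisfies
`d(ξ) > d(α)` for all limits `ξ` in a tail below `α`; taking the least `n` with `d = n` on
uncountably many limits and an accumulation point of these above all limits with `d < n` gives a
contradiction.
-/

open Filter Topology

theorem omega1_eq : omega1 = ω_ 1 := Cardinal.ord_aleph 1

theorem isSuccLimit_omega1 : Order.IsSuccLimit omega1 :=
  omega1_eq ▸ Cardinal.isSuccLimit_omega 1

theorem card_le_aleph0_of_lt_omega1 {α : Ordinal.{0}} (hα : α < omega1) :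
    α.card ≤ Cardinal.aleph0 :=
  Cardinal.lt_aleph_one_iff.mp (Cardinal.lt_ord.mp hα)

theorem countable_Iio_of_lt_omega1 {α : Ordinal.{0}} (hα : α < omega1) : (Iio α).Countable := by
  rw [← Cardinal.le_aleph0_iff_set_countable, Cardinal.mk_Iio_ordinal, Cardinal.lift_le_aleph0]
  exact card_le_aleph0_of_lt_omega1 hα

theorem exists_lt_omega1_subset_Iio {S : Set Ordinal.{0}} (hS : S.Countable)
    (hS1 : S ⊆ Iio omega1) : ∃ γ < omega1, S ⊆ Iio γ := by
  have : Countable S := hS.to_subtype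
  refine ⟨⨆ x : S, Order.succ x.1, ?_, fun x hx => ?_⟩
  · rw [omega1_eq]
    exact Ordinal.iSup_lt_omega_one fun x => omega1_eq ▸ isSuccLimit_omega1.succ_lt (hS1 x.2)
  · exact (Order.lt_succ x).trans_le (Ordinal.le_iSup (fun x : S => Order.succ x.1) ⟨x, hx⟩)

theorem not_countable_Iio_omega1 : ¬ (Iio omega1).Countable := fun h => by
  obtain ⟨γ, hγ, hsub⟩ := exists_lt_omega1_subset_Iio h subset_rfl
  exact lt_irrefl γ (hsub hγ)

theorem countable_of_finite_inter_Iio {S : Set Ordinal.{0}} (hS1 : S ⊆ Iio omega1)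
    (hS : ∀ γ < omega1, (S ∩ Iio γ).Finite) : S.Countable := by
  by_contra hunc
  let f := Set.Infinite.natEmbedding S fun h => hunc h.countable
  have hfS : range (Subtype.val ∘ f) ⊆ S := by rintro _ ⟨n, rfl⟩; exact (f n).2
  obtain ⟨γ, hγ, hfγ⟩ := exists_lt_omega1_subset_Iio (countable_range _) (hfS.trans hS1)
  exact infinite_range_of_injective (Subtype.val_injective.comp f.injective)
    ((hS γ hγ).subset (subset_inter hfS hfγ))

theorem finite_Iio_of_lt_omega0 {o : Ordinal} (ho : o < ω) : (Iio o).Finite := by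
  rw [← Cardinal.lt_aleph0_iff_set_finite, Cardinal.mk_Iio_ordinal, Cardinal.lift_lt_aleph0]
  exact Cardinal.lt_ord.mp (Cardinal.ord_aleph0 ▸ ho)

namespace Ordinal

theorem eventually_nhdsLT_iff {α : Ordinal} (hα : 0 < α) {p : Ordinal → Prop} :
    (∀ᶠ ξ in 𝓝[<] α, p ξ) ↔ ∃ s < α, ∀ ξ, s < ξ → ξ < α → p ξ := by
  simp [(nhdsLT_basis_of_exists_lt ⟨0, hα⟩).eventually_iff]

theorem frequently_nhdsLT_iff {α : Ordinal} (hα : 0 < α) {p : Ordinal → Prop} :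
    (∃ᶠ ξ in 𝓝[<] α, p ξ) ↔ ∀ s < α, ∃ ξ, s < ξ ∧ ξ < α ∧ p ξ := by
  simp [(nhdsLT_basis_of_exists_lt ⟨0, hα⟩).frequently_iff, and_assoc]

theorem nhdsLT_neBot {α : Ordinal} (hα : Order.IsSuccLimit α) : (𝓝[<] α).NeBot := by
  rw [← frequently_true_iff_neBot, frequently_nhdsLT_iff hα.bot_lt]
  exact fun s hs => ⟨Order.succ s, Order.lt_succ s, hα.succ_lt hs, trivial⟩

theorem isSuccLimit_of_frequently {α : Ordinal} {p : Ordinal → Prop}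
    (h : ∃ᶠ ξ in 𝓝[<] α, p ξ) : Order.IsSuccLimit α :=
  AccPt.isSuccLimit (accPt_iff_frequently_nhdsNE.mpr
    (h.filter_mono (nhdsWithin_mono α fun _ hξ => ne_of_lt hξ)))

end Ordinal

theorem exists_frequently_nhdsLT_mem {S : Set Ordinal.{0}} (hS : ¬ S.Countable)
    (hS1 : S ⊆ Iio omega1) {γ : Ordinal} (hγ : γ < omega1) :
    ∃ α < omega1, γ < α ∧ ∃ᶠ ξ in 𝓝[<] α, ξ ∈ S := by
  have hnext : ∀ x : Ordinal, ∃ y, x < omega1 → y ∈ S ∧ x < y := fun x => by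
    by_cases hx : x < omega1
    · obtain ⟨y, hyS, hxy⟩ : ∃ y ∈ S, x < y := by
        by_contra! h
        exact hS ((countable_Iio_of_lt_omega1 (isSuccLimit_omega1.succ_lt hx)).mono
          fun y hy => Order.lt_succ_iff.mpr (h y hy))
      exact ⟨y, fun _ => ⟨hyS, hxy⟩⟩
    · exact ⟨0, fun h => absurd h hx⟩
  choose next hnext using hnext
  have hlt : ∀ n, next^[n] γ < omega1 := fun n => by
    induction n with
    | zero => exact hγ
    | succ n ih => rw [Function.iterate_succ_apply']; exact hS1 (hnext _ ih).1
  have hmem : ∀ n, next^[n + 1] γ ∈ S := fun n => by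
    rw [Function.iterate_succ_apply']; exact (hnext _ (hlt n)).1
  have hsucc : ∀ n, next^[n] γ < next^[n + 1] γ := fun n => by
    rw [Function.iterate_succ_apply' next n]; exact (hnext _ (hlt n)).2
  have hle : ∀ n, next^[n] γ ≤ ⨆ n, next^[n] γ := Ordinal.le_iSup _
  have hγα : γ < ⨆ n, next^[n] γ := (hsucc 0).trans_le (hle 1)
  refine ⟨⨆ n, next^[n] γ, omega1_eq ▸ Ordinal.iSup_lt_omega_one (omega1_eq ▸ hlt), hγα, ?_⟩
  rw [Ordinal.frequently_nhdsLT_iff hγα.pos]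
  intro s hs
  obtain ⟨n, hn⟩ := Ordinal.lt_iSup_iff.mp hs
  exact ⟨_, hn.trans (hsucc n), (hsucc (n + 1)).trans_le (hle (n + 2)), hmem n⟩

theorem not_forall_eventually_lt_of_isSuccLimit (d : Ordinal.{0} → ℕ) :
    ¬ ∀ α < omega1, Order.IsSuccLimit α →
      ∀ᶠ ξ in 𝓝[<] α, Order.IsSuccLimit ξ → d α < d ξ := fun h => by
  classical
  let L := {α | α < omega1 ∧ Order.IsSuccLimit α}
  have hL : ¬ L.Countable := fun hL => by
    obtain ⟨γ, hγ, hLγ⟩ := exists_lt_omega1_subset_Iio hL fun α hα => hα.1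
    obtain ⟨α, hα, hγα, hfreq⟩ :=
      exists_frequently_nhdsLT_mem not_countable_Iio_omega1 subset_rfl hγ
    exact lt_asymm hγα (hLγ ⟨hα, Ordinal.isSuccLimit_of_frequently hfreq⟩)
  have hex : ∃ n, ¬ {α ∈ L | d α = n}.Countable := by
    by_contra! hcount
    exact hL ((countable_iUnion hcount).mono fun α hα => by simpa using hα)
  let n := Nat.find hex
  have hbelow : {α ∈ L | d α < n}.Countable :=
    ((Set.finite_Iio n).countable.biUnion fun m hm =>
      not_not.mp (Nat.find_min hex (mem_Iio.mp hm))).mono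
      fun α hα => by simpa [and_comm] using hα
  obtain ⟨γ, hγ, hbelowγ⟩ := exists_lt_omega1_subset_Iio hbelow fun α hα => hα.1.1
  obtain ⟨α, hα, hγα, hfreq⟩ :=
    exists_frequently_nhdsLT_mem (Nat.find_spec hex) (fun ξ hξ => hξ.1.1) hγ
  have hlim := Ordinal.isSuccLimit_of_frequently hfreq
  obtain ⟨ξ, ⟨⟨-, hξlim⟩, hξn⟩, hlt⟩ := (hfreq.and_eventually (h α hα hlim)).exists
  exact lt_asymm hγα (hbelowγ ⟨⟨hα, hlim⟩, (hlt hξlim).trans_eq hξn⟩)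

theorem isOtp_ncard {s : Set Ordinal.{0}} (hs : s.Finite) : IsOtp s s.ncard := by
  let e : Fin s.ncard ≃o s :=
    (hs.toFinset.orderIsoOfFin (Set.ncard_eq_toFinset_card s hs).symm).trans
      (OrderIso.setCongr _ _ hs.coe_toFinset)
  let f : Fin s.ncard → Iio (s.ncard : Ordinal) :=
    fun k => ⟨k, mem_Iio.mpr (Nat.cast_lt.mpr k.2)⟩
  have hf : StrictMono f := fun a b hab => Subtype.mk_lt_mk.mpr (Nat.cast_lt.mpr hab)
  have hsurj : Function.Surjective f := fun ⟨x, hx⟩ => by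
    obtain ⟨m, rfl⟩ := Ordinal.lt_omega0.mp (hx.trans (Ordinal.natCast_lt_omega0 _))
    exact ⟨⟨m, Nat.cast_lt.mp (mem_Iio.mp hx)⟩, rfl⟩
  exact ⟨e.symm.trans (hf.orderIsoOfSurjective f hsurj)⟩

theorem finite_setOf_ncard_inter_Iio_le {γ : Type*} [LinearOrder γ] {s : Set γ}
    (hs : ∀ x ∈ s, (s ∩ Iio x).Finite) (n : ℕ) : {x ∈ s | (s ∩ Iio x).ncard ≤ n}.Finite := by
  have hmono : StrictMonoOn (fun x => (s ∩ Iio x).ncard) s := fun x hx y hy hxy =>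
    Set.ncard_lt_ncard ⟨inter_subset_inter_right _ (Iio_subset_Iio hxy.le),
      fun h => lt_irrefl x (h ⟨hx, hxy⟩).2⟩ (hs y hy)
  refine Set.Finite.of_finite_image ((Set.finite_Iic n).subset ?_)
    (hmono.injOn.mono fun x hx => hx.1)
  rintro _ ⟨x, hx, rfl⟩
  exact hx.2

section Tree

variable {rho : Ordinal.{0} → Ordinal.{0} → ℤ} {α : Ordinal.{0}}

def treeNode (rho : Ordinal.{0} → Ordinal.{0} → ℤ) (α β : Ordinal.{0}) : Ordinal.{0} → ℤ :=
  fun ξ => if ξ < α then rho ξ β else 0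

def TailCoherent (rho : Ordinal.{0} → Ordinal.{0} → ℤ) (G : ℤ → ℤ → ℤ) : Prop :=
  ∀ α β, α < β → β < omega1 → ∃ k, ∀ᶠ ξ in 𝓝[<] α, rho ξ β = G (rho ξ α) k

def IsBranch (rho : Ordinal.{0} → Ordinal.{0} → ℤ) (b : Ordinal.{0} → ℤ) : Prop :=
  ∀ α < omega1, ∃ β, α ≤ β ∧ β < omega1 ∧ ∀ ξ < α, b ξ = rho ξ β

theorem level_subset_image_treeNode :
    {p ∈ treeT rho | p.1 = α} ⊆ Prod.mk α '' (treeNode rho α '' Ico α omega1) := by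
  rintro ⟨γ, f⟩ ⟨⟨β, hγβ, hβ, hf⟩, rfl⟩
  exact ⟨f, ⟨β, ⟨hγβ, hβ⟩, hf.symm⟩, rfl⟩

/-- Below `α` a node is determined by its restriction to some `s < α`, its value at `s`, and
the parameter `k` of the coherence relation with `ρ(·, α)` above `s`. -/
theorem TailCoherent.countable_image_treeNode {G : ℤ → ℤ → ℤ} (hG : TailCoherent rho G)
    (hα : α < omega1) : (treeNode rho α '' Ico α omega1).Countable := by
  induction α using WellFoundedLT.induction with
  | _ α ih =>
    rcases eq_zero_or_pos α with rfl | hpos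
    · refine (countable_singleton 0).mono ?_
      rintro _ ⟨β, -, rfl⟩
      funext ξ
      simp [treeNode]
    let glue (s : Ordinal) (q : (Ordinal → ℤ) × ℤ × ℤ) : Ordinal → ℤ := fun ξ =>
      if ξ < s then q.1 ξ else if ξ = s then q.2.1 else if ξ < α then G (rho ξ α) q.2.2 else 0
    have hcount : ({treeNode rho α α} ∪ ⋃ s ∈ Iio α,
        glue s '' ((treeNode rho s '' Ico s omega1) ×ˢ Set.univ)).Countable :=
      (countable_singleton _).union <| (countable_Iio_of_lt_omega1 hα).biUnion fun s hs =>
        ((ih s hs (hs.trans hα)).prod countable_univ).image _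
    refine hcount.mono ?_
    rintro _ ⟨β, ⟨hαβ, hβ⟩, rfl⟩
    rcases hαβ.eq_or_lt with rfl | hαβ
    · exact Or.inl rfl
    obtain ⟨k, hk⟩ := hG α β hαβ hβ
    obtain ⟨s, hs, hsk⟩ := (Ordinal.eventually_nhdsLT_iff hpos).mp hk
    refine Or.inr (mem_biUnion hs ⟨(treeNode rho s β, rho s β, k),
      ⟨⟨β, ⟨hs.le.trans hαβ.le, hβ⟩, rfl⟩, trivial⟩, funext fun ξ => ?_⟩)
    simp only [glue, treeNode]
    split_ifs <;> grind

theorem exists_isBranch_of_chain {c : Set (Ordinal.{0} × (Ordinal.{0} → ℤ))}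
    (hsub : c ⊆ treeT rho) (hchain : ∀ p ∈ c, ∀ q ∈ c, treeLE p q ∨ treeLE q p)
    (hunc : ¬ c.Countable) : ∃ b, IsBranch rho b := by
  have hagree : ∀ p ∈ c, ∀ q ∈ c, ∀ ξ < p.1, ξ < q.1 → p.2 ξ = q.2 ξ :=
    fun p hp q hq ξ hξp hξq => (hchain p hp q hq).elim (·.2 ξ hξp) fun h => (h.2 ξ hξq).symm
  have hinj : InjOn Prod.fst c := fun p hp q hq hpq => by
    obtain ⟨β, -, -, hpβ⟩ := hsub hp
    obtain ⟨γ, -, -, hqγ⟩ := hsub hq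
    refine Prod.ext hpq (funext fun ξ => ?_)
    by_cases hξ : ξ < p.1
    · exact hagree p hp q hq ξ hξ (hpq ▸ hξ)
    · simp [hpβ, hqγ, hξ, ← hpq]
  have hunb : ∀ γ < omega1, ∃ p ∈ c, γ < p.1 := fun γ hγ => by
    by_contra! h
    refine hunc (MapsTo.countable_of_injOn (fun p hp => ?_) hinj
      (countable_Iio_of_lt_omega1 (isSuccLimit_omega1.succ_lt hγ)))
    exact Order.lt_succ_iff.mpr (h p hp)
  choose! P hPc hPlt using hunb
  refine ⟨fun ξ => (P ξ).2 ξ, fun α hα => ?_⟩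
  obtain ⟨β, hβ1, hβ, hPβ⟩ := hsub (hPc α hα)
  refine ⟨β, (hPlt α hα).le.trans hβ1, hβ, fun ξ hξ => ?_⟩
  have hξP : ξ < (P α).1 := hξ.trans (hPlt α hα)
  show (P ξ).2 ξ = rho ξ β
  rw [hagree _ (hPc ξ (hξ.trans hα)) _ (hPc α hα) ξ (hPlt ξ (hξ.trans hα)) hξP, hPβ]
  exact if_pos hξP

theorem not_isBranch_of_finite_fiber
    (hfin : ∀ β < omega1, ∀ n : ℤ, {ξ | ξ < β ∧ rho ξ β = n}.Finite) (b : Ordinal.{0} → ℤ) :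
    ¬ IsBranch rho b := fun hb => by
  refine not_countable_Iio_omega1 ((countable_iUnion fun n : ℤ =>
    countable_of_finite_inter_Iio (S := {ξ ∈ Iio omega1 | b ξ = n}) (fun ξ hξ => hξ.1)
      fun γ hγ => ?_).mono fun ξ hξ => by simpa using hξ)
  obtain ⟨β, hγβ, hβ, hbβ⟩ := hb γ hγ
  refine (hfin β hβ n).subset ?_
  rintro ξ ⟨⟨-, hξn⟩, hξγ⟩
  exact ⟨hξγ.trans_le hγβ, hbβ ξ hξγ ▸ hξn⟩

end Tree

section Walks

variable {C : Ordinal.{0} → Set Ordinal.{0}} {Tr : Ordinal.{0} → Ordinal.{0} → Finset Ordinal.{0}}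
  {rho : Ordinal.{0} → Ordinal.{0} → ℤ} {rho1 : Ordinal.{0} → Ordinal.{0} → ℕ}
  {α β β' ξ η : Ordinal.{0}}

def walkStep (C : Ordinal.{0} → Set Ordinal.{0}) (α β : Ordinal.{0}) : Ordinal.{0} :=
  sInf (C β \ Iio α)

namespace IsCSequence

theorem walkStep_mem (hC : IsCSequence C) (hαβ : α < β) (hβ : β < omega1) :
    walkStep C α β ∈ C β \ Iio α := by
  obtain ⟨x, hx, hαx⟩ := (hC β hβ).2 α hαβ
  exact csInf_mem ⟨x, hx, not_lt.mpr hαx⟩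

theorem le_walkStep (hC : IsCSequence C) (hαβ : α < β) (hβ : β < omega1) :
    α ≤ walkStep C α β :=
  not_lt.mp (hC.walkStep_mem hαβ hβ).2

theorem walkStep_lt (hC : IsCSequence C) (hαβ : α < β) (hβ : β < omega1) :
    walkStep C α β < β :=
  (hC β hβ).1 _ (hC.walkStep_mem hαβ hβ).1

theorem inter_Iio_walkStep (hC : IsCSequence C) (hαβ : α < β) (hβ : β < omega1) :
    C β ∩ Iio (walkStep C α β) = C β ∩ Iio α := by
  ext x
  simp only [mem_inter_iff, mem_Iio]
  refine and_congr_right fun hx => ⟨fun hxm => not_le.mp fun hαx => ?_,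
    fun hxα => lt_of_lt_of_le hxα (hC.le_walkStep hαβ hβ)⟩
  exact not_le.mpr hxm (csInf_le' ⟨hx, not_lt.mpr hαx⟩)

/-- `(⋆)` makes `otp (C η) = cf η ≤ ω` for countable `η`. -/
theorem finite_inter_Iio (hC : IsCSequence C) (hstar : StarProperty C) (hη : η < omega1)
    (hαη : α < η) : (C η ∩ Iio α).Finite := by
  obtain ⟨e⟩ := hstar η hη
  obtain ⟨x, hx, hαx⟩ := (hC η hη).2 α hαη
  have hcof : (Ordinal.cof η).ord ≤ ω := by
    rw [Cardinal.ord_le, Ordinal.card_omega0]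
    exact (Ordinal.cof_le_card η).trans (card_le_aleph0_of_lt_omega1 hη)
  have hfin : (e ⁻¹' (Subtype.val ⁻¹' Iio (e ⟨x, hx⟩ : Ordinal))).Finite :=
    ((finite_Iio_of_lt_omega0 ((e ⟨x, hx⟩).2.trans_le hcof)).preimage
      Subtype.val_injective.injOn).preimage e.injective.injOn
  refine (hfin.image Subtype.val).subset fun y ⟨hy, hyα⟩ => ⟨⟨y, hy⟩, ?_, rfl⟩
  exact e.strictMono (Subtype.mk_lt_mk.mpr (hyα.trans_le hαx))

end IsCSequence

namespace IsUpperTrace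

theorem eq_insert (hTr : IsUpperTrace C Tr) (hαβ : α < β) (hβ : β < omega1) :
    Tr α β = insert β (Tr α (walkStep C α β)) :=
  hTr.2 α β hαβ hβ

theorem top_mem (hTr : IsUpperTrace C Tr) (hαβ : α ≤ β) (hβ : β < omega1) : β ∈ Tr α β := by
  rcases hαβ.eq_or_lt with rfl | hlt
  · simp [hTr.1]
  · simp [hTr.eq_insert hlt hβ]

theorem self_mem_and_mem_Icc (hC : IsCSequence C) (hTr : IsUpperTrace C Tr) (hαβ : α ≤ β)
    (hβ : β < omega1) : α ∈ Tr α β ∧ ∀ η ∈ Tr α β, η ∈ Icc α β := by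
  induction β using WellFoundedLT.induction with
  | _ β ih =>
    rcases hαβ.eq_or_lt with rfl | hlt
    · simp [hTr.1]
    have hm := hC.walkStep_lt hlt hβ
    obtain ⟨hself, hIcc⟩ := ih _ hm (hC.le_walkStep hlt hβ) (hm.trans hβ)
    rw [hTr.eq_insert hlt hβ]
    refine ⟨Finset.mem_insert_of_mem hself, fun η hη => ?_⟩
    rcases Finset.mem_insert.mp hη with rfl | hη
    · exact ⟨hlt.le, le_rfl⟩
    · exact ⟨(hIcc η hη).1, (hIcc η hη).2.trans hm.le⟩

theorem self_mem (hC : IsCSequence C) (hTr : IsUpperTrace C Tr) (hαβ : α ≤ β)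
    (hβ : β < omega1) : α ∈ Tr α β :=
  (hTr.self_mem_and_mem_Icc hC hαβ hβ).1

theorem mem_Icc (hC : IsCSequence C) (hTr : IsUpperTrace C Tr) (hαβ : α ≤ β)
    (hβ : β < omega1) (hη : η ∈ Tr α β) : η ∈ Icc α β :=
  (hTr.self_mem_and_mem_Icc hC hαβ hβ).2 η hη

end IsUpperTrace

def traceBelow (C : Ordinal.{0} → Set Ordinal.{0})
    (Tr : Ordinal.{0} → Ordinal.{0} → Finset Ordinal.{0}) (α β : Ordinal.{0}) :
    Set Ordinal.{0} :=
  ⋃ η ∈ (Tr α β).erase α, C η ∩ Iio α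

theorem mem_traceBelow {x : Ordinal} :
    x ∈ traceBelow C Tr α β ↔ ∃ η ∈ Tr α β, η ≠ α ∧ x ∈ C η ∧ x < α := by
  simp only [traceBelow, mem_iUnion, Finset.mem_erase, mem_inter_iff, mem_Iio, exists_prop]
  grind

namespace IsUpperTrace

theorem finite_traceBelow (hC : IsCSequence C) (hstar : StarProperty C)
    (hTr : IsUpperTrace C Tr) (hαβ : α ≤ β) (hβ : β < omega1) :
    (traceBelow C Tr α β).Finite := by
  refine ((Tr α β).erase α).finite_toSet.biUnion fun η hη => ?_
  obtain ⟨hηα, hη⟩ := Finset.mem_erase.mp hη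
  obtain ⟨hαη, hηβ⟩ := hTr.mem_Icc hC hαβ hβ hη
  exact hC.finite_inter_Iio hstar (hηβ.trans_lt hβ) (hαη.lt_of_ne' hηα)

theorem eq_erase_union_of_traceBelow_lt (hC : IsCSequence C) (hTr : IsUpperTrace C Tr)
    (hξα : ξ < α) (hαβ : α < β) (hβ : β < omega1) (hξ : ∀ x ∈ traceBelow C Tr α β, x < ξ) :
    Tr ξ β = (Tr α β).erase α ∪ Tr ξ α := by
  induction β using WellFoundedLT.induction with
  | _ β ih =>
    have hstep : walkStep C ξ β = walkStep C α β := by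
      refine congrArg sInf (ext fun x => and_congr_right fun hx =>
        not_congr ⟨fun hxξ => hxξ.trans hξα, fun hxα => hξ x ?_⟩)
      exact mem_traceBelow.mpr ⟨β, hTr.top_mem hαβ.le hβ, hαβ.ne', hx, hxα⟩
    have hm : Tr ξ (walkStep C α β) = (Tr α (walkStep C α β)).erase α ∪ Tr ξ α := by
      rcases (hC.le_walkStep hαβ hβ).eq_or_lt with hαm | hαm
      · rw [← hαm, hTr.1]; simp
      · refine ih _ (hC.walkStep_lt hαβ hβ) hαm ((hC.walkStep_lt hαβ hβ).trans hβ) fun x hx => ?_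
        obtain ⟨η, hη, hne, hxη, hxα⟩ := mem_traceBelow.mp hx
        have hη' : η ∈ Tr α β := by rw [hTr.eq_insert hαβ hβ]; exact Finset.mem_insert_of_mem hη
        exact hξ x (mem_traceBelow.mpr ⟨η, hη', hne, hxη, hxα⟩)
    rw [hTr.eq_insert (hξα.trans hαβ) hβ, hstep, hm, hTr.eq_insert hαβ hβ,
      Finset.erase_insert_of_ne hαβ.ne', Finset.insert_union]

theorem eventually_traceBelow_lt (hC : IsCSequence C) (hstar : StarProperty C)
    (hTr : IsUpperTrace C Tr) (hαβ : α ≤ β) (hβ : β < omega1) :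
    ∀ᶠ ξ in 𝓝[<] α, ∀ x ∈ traceBelow C Tr α β, x < ξ := by
  refine (hTr.finite_traceBelow hC hstar hαβ hβ).eventually_all.mpr fun x hx => ?_
  obtain ⟨-, -, -, -, hxα⟩ := mem_traceBelow.mp hx
  exact mem_of_superset (Ioo_mem_nhdsLT hxα) fun ξ hξ => hξ.1

theorem rho2_self (hTr : IsUpperTrace C Tr) : rho2 Tr α α = 1 := by
  simp [rho2, hTr.1]

theorem two_le_rho2 (hC : IsCSequence C) (hTr : IsUpperTrace C Tr) (hαβ : α < β)
    (hβ : β < omega1) : 2 ≤ rho2 Tr α β := by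
  have : 1 < (Tr α β).card := Finset.one_lt_card.mpr
    ⟨α, hTr.self_mem hC hαβ.le hβ, β, hTr.top_mem hαβ.le hβ, hαβ.ne⟩
  unfold rho2
  omega

theorem eventually_rho2_eq (hC : IsCSequence C) (hstar : StarProperty C)
    (hTr : IsUpperTrace C Tr) (hαβ : α ≤ β) (hβ : β < omega1) :
    ∀ᶠ ξ in 𝓝[<] α, rho2 Tr ξ β = rho2 Tr ξ α + (rho2 Tr α β - 1) := by
  rcases hαβ.eq_or_lt with rfl | hαβ
  · simp [hTr.rho2_self]
  filter_upwards [hTr.eventually_traceBelow_lt hC hstar hαβ.le hβ, self_mem_nhdsWithin]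
    with ξ hξ (hξα : ξ < α)
  have hdisj : Disjoint ((Tr α β).erase α) (Tr ξ α) := Finset.disjoint_left.mpr fun η hη hη' =>
    have hαη := (hTr.mem_Icc hC hαβ.le hβ (Finset.mem_of_mem_erase hη)).1
    (hαη.lt_of_ne' (Finset.ne_of_mem_erase hη)).not_ge
      (hTr.mem_Icc hC hξα.le (hαβ.trans hβ) hη').2
  rw [rho2, hTr.eq_erase_union_of_traceBelow_lt hC hξα hαβ hβ hξ,
    Finset.card_union_of_disjoint hdisj, Nat.cast_add,
    Finset.cast_card_erase_of_mem (hTr.self_mem hC hαβ.le hβ), rho2, rho2]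
  ring

theorem tailCoherent_rho2 (hC : IsCSequence C) (hstar : StarProperty C)
    (hTr : IsUpperTrace C Tr) : TailCoherent (rho2 Tr) (· + ·) := fun _ _ hαβ hβ =>
  ⟨_, hTr.eventually_rho2_eq hC hstar hαβ.le hβ⟩

theorem rho2_eq_of_isSuccLimit (hC : IsCSequence C) (hstar : StarProperty C)
    (hTr : IsUpperTrace C Tr) {b : Ordinal.{0} → ℤ} (hα : Order.IsSuccLimit α)
    (hαβ : α ≤ β) (hβ : β < omega1) (hb : ∀ ξ < α, b ξ = rho2 Tr ξ β)
    (hαβ' : α ≤ β') (hβ' : β' < omega1) (hb' : ∀ ξ < α, b ξ = rho2 Tr ξ β') :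
    rho2 Tr α β = rho2 Tr α β' := by
  have := Ordinal.nhdsLT_neBot hα
  obtain ⟨ξ, h, h', hξα⟩ := ((hTr.eventually_rho2_eq hC hstar hαβ hβ).and
    ((hTr.eventually_rho2_eq hC hstar hαβ' hβ').and self_mem_nhdsWithin)).exists
  linarith [(hb ξ hξα).symm.trans (hb' ξ hξα)]

theorem not_isBranch_rho2 (hC : IsCSequence C) (hstar : StarProperty C)
    (hTr : IsUpperTrace C Tr) (b : Ordinal.{0} → ℤ) : ¬ IsBranch (rho2 Tr) b := fun hb => by
  choose! B hαB hB hbB using hb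
  refine not_forall_eventually_lt_of_isSuccLimit (fun α => (Tr α (B α)).card) fun α hα _ => ?_
  filter_upwards [hTr.eventually_rho2_eq hC hstar (hαB α hα) (hB α hα), self_mem_nhdsWithin]
    with ξ hξ (hξα : ξ < α) hξlim
  have hξω := hξα.trans hα
  have heq := hTr.rho2_eq_of_isSuccLimit hC hstar hξlim (hαB ξ hξω) (hB ξ hξω) (hbB ξ hξω)
    (hξα.le.trans (hαB α hα)) (hB α hα) fun η hη => hbB α hα η (hη.trans hξα)
  have : rho2 Tr α (B α) < rho2 Tr ξ (B ξ) := by linarith [hTr.two_le_rho2 hC hξα hα]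
  exact Nat.cast_lt.mp this

end IsUpperTrace

def weights (C : Ordinal.{0} → Set Ordinal.{0})
    (Tr : Ordinal.{0} → Ordinal.{0} → Finset Ordinal.{0}) (α β : Ordinal.{0}) :
    Set Ordinal.{0} :=
  {o | ∃ η ∈ Tr α β, η ≠ α ∧ IsOtp (C η ∩ Iio α) o}

theorem IsUpperTrace.weights_eq_union (hC : IsCSequence C) (hTr : IsUpperTrace C Tr)
    (hξα : ξ < α) (hαβ : α < β) (hβ : β < omega1) (hξ : ∀ x ∈ traceBelow C Tr α β, x < ξ) :
    weights C Tr ξ β = weights C Tr α β ∪ weights C Tr ξ α := by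
  have hinter : ∀ η ∈ (Tr α β).erase α, C η ∩ Iio ξ = C η ∩ Iio α := fun η hη => by
    refine Set.ext fun x => and_congr_right fun hx => ⟨fun hxξ => hxξ.trans hξα, fun hxα => ?_⟩
    obtain ⟨hne, hη⟩ := Finset.mem_erase.mp hη
    exact hξ x (mem_traceBelow.mpr ⟨η, hη, hne, hx, hxα⟩)
  have hξη : ∀ η ∈ (Tr α β).erase α, η ≠ ξ := fun η hη =>
    (hξα.trans_le (hTr.mem_Icc hC hαβ.le hβ (Finset.mem_of_mem_erase hη)).1).ne'
  ext o
  simp only [weights, mem_union, mem_ofPred_eq,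
    hTr.eq_erase_union_of_traceBelow_lt hC hξα hαβ hβ hξ, Finset.mem_union]
  constructor
  · rintro ⟨η, hη | hη, hne, ho⟩
    · exact Or.inl ⟨η, Finset.mem_of_mem_erase hη, Finset.ne_of_mem_erase hη, hinter η hη ▸ ho⟩
    · exact Or.inr ⟨η, hη, hne, ho⟩
  · rintro (⟨η, hη, hne, ho⟩ | ⟨η, hη, hne, ho⟩)
    · have hη' := Finset.mem_erase.mpr ⟨hne, hη⟩
      exact ⟨η, Or.inl hη', hξη η hη', (hinter η hη').symm ▸ ho⟩
    · exact ⟨η, Or.inr hη, hne, ho⟩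

namespace IsRho1

theorem isGreatest (hrho1 : IsRho1 C Tr rho1) (hαβ : α < β) (hβ : β < omega1) :
    IsGreatest (weights C Tr α β) (rho1 α β) :=
  hrho1 α β hαβ hβ

theorem eventually_eq_max (hrho1 : IsRho1 C Tr rho1) (hC : IsCSequence C)
    (hstar : StarProperty C) (hTr : IsUpperTrace C Tr) (hαβ : α < β) (hβ : β < omega1) :
    ∀ᶠ ξ in 𝓝[<] α, rho1 ξ β = max (rho1 α β) (rho1 ξ α) := by
  filter_upwards [hTr.eventually_traceBelow_lt hC hstar hαβ.le hβ, self_mem_nhdsWithin]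
    with ξ hξ (hξα : ξ < α)
  have h := hrho1.isGreatest (hξα.trans hαβ) hβ
  rw [hTr.weights_eq_union hC hξα hαβ hβ hξ] at h
  have h' := (hrho1.isGreatest hαβ hβ).union (hrho1.isGreatest hξα (hαβ.trans hβ))
  rw [← Nat.mono_cast.map_max] at h'
  exact_mod_cast h.unique h'

theorem ncard_inter_Iio_le (hrho1 : IsRho1 C Tr rho1) (hC : IsCSequence C)
    (hstar : StarProperty C) (hTr : IsUpperTrace C Tr) (hξβ : ξ < β) (hβ : β < omega1) :
    (C β ∩ Iio ξ).ncard ≤ rho1 ξ β := by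
  have hw : ((C β ∩ Iio ξ).ncard : Ordinal) ∈ weights C Tr ξ β :=
    ⟨β, hTr.top_mem hξβ.le hβ, hξβ.ne', isOtp_ncard (hC.finite_inter_Iio hstar hβ hξβ)⟩
  exact_mod_cast (hrho1.isGreatest hξβ hβ).2 hw

theorem walkStep_le (hrho1 : IsRho1 C Tr rho1) (hTr : IsUpperTrace C Tr) (hξβ : ξ < β)
    (hβ : β < omega1) (hξm : ξ < walkStep C ξ β) (hm : walkStep C ξ β < omega1) :
    rho1 ξ (walkStep C ξ β) ≤ rho1 ξ β := by
  refine Nat.cast_le.mp ((hrho1.isGreatest hξm hm).mono (hrho1.isGreatest hξβ hβ) ?_)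
  rintro o ⟨η, hη, hne, ho⟩
  exact ⟨η, by rw [hTr.eq_insert hξβ hβ]; exact Finset.mem_insert_of_mem hη, hne, ho⟩

/-- The walk from `β` to `ξ` first steps to some `m ∈ C β` whose position in `C β` is at most
`ρ₁(ξ, β)`, and from there continues with weights `≤ ρ₁(ξ, β)`. -/
theorem finite_setOf_le (hrho1 : IsRho1 C Tr rho1) (hC : IsCSequence C)
    (hstar : StarProperty C) (hTr : IsUpperTrace C Tr) (hβ : β < omega1) (n : ℕ) :
    {ξ | ξ < β ∧ rho1 ξ β ≤ n}.Finite := by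
  induction β using WellFoundedLT.induction with
  | _ β ih =>
    let T := {m ∈ C β | (C β ∩ Iio m).ncard ≤ n}
    have hT : T.Finite := finite_setOf_ncard_inter_Iio_le
      (fun m hm => hC.finite_inter_Iio hstar hβ ((hC β hβ).1 m hm)) n
    have hCβ : ∀ m ∈ T, m < β := fun m hm => (hC β hβ).1 m hm.1
    refine ((hT.biUnion fun m hm => ih m (hCβ m hm) ((hCβ m hm).trans hβ)).union hT).subset ?_
    rintro ξ ⟨hξβ, hξn⟩
    have hm : walkStep C ξ β < β := hC.walkStep_lt hξβ hβ
    have hmT : walkStep C ξ β ∈ T := ⟨(hC.walkStep_mem hξβ hβ).1, by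
      rw [hC.inter_Iio_walkStep hξβ hβ]
      exact (hrho1.ncard_inter_Iio_le hC hstar hTr hξβ hβ).trans hξn⟩
    rcases (hC.le_walkStep hξβ hβ).eq_or_lt with hξm | hξm
    · exact Or.inr (hξm ▸ hmT)
    · exact Or.inl (mem_biUnion hmT ⟨hξm,
        (hrho1.walkStep_le hTr hξβ hβ hξm (hm.trans hβ)).trans hξn⟩)

theorem tailCoherent (hrho1 : IsRho1 C Tr rho1) (hC : IsCSequence C) (hstar : StarProperty C)
    (hTr : IsUpperTrace C Tr) (hlink : ∀ α β, α < β → β < omega1 → rho α β = rho1 α β) :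
    TailCoherent rho max := fun α β hαβ hβ => ⟨rho1 α β, by
  filter_upwards [hrho1.eventually_eq_max hC hstar hTr hαβ hβ, self_mem_nhdsWithin]
    with ξ h (hξα : ξ < α)
  rw [hlink ξ β (hξα.trans hαβ) hβ, hlink ξ α hξα (hαβ.trans hβ), h, Nat.cast_max, max_comm]⟩

theorem not_isBranch (hrho1 : IsRho1 C Tr rho1) (hC : IsCSequence C) (hstar : StarProperty C)
    (hTr : IsUpperTrace C Tr) (hlink : ∀ α β, α < β → β < omega1 → rho α β = rho1 α β)
    (b : Ordinal.{0} → ℤ) : ¬ IsBranch rho b := by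
  refine not_isBranch_of_finite_fiber (fun β hβ n => ?_) b
  refine (hrho1.finite_setOf_le hC hstar hTr hβ n.toNat).subset fun ξ ⟨hξβ, hξn⟩ => ⟨hξβ, ?_⟩
  rw [hlink ξ β hξβ hβ] at hξn
  omega

end IsRho1

end Walks

/-- Corollary: for a C-sequence on ω₁ satisfying (⋆) and `ρ` either of the characteristics
`ρ₁`, `ρ₂`, the tree `T(ρ)`, ordered by extension, is an Aronszajn tree: it has elements
with domain `α` for every `α < ω₁`, all its levels are countable, and it has no
uncountable chain. -/
theorem statement7 (C : Ordinal → Set Ordinal) (hC : IsCSequence C) (hstar : StarProperty C)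
    (Tr : Ordinal → Ordinal → Finset Ordinal) (hTr : IsUpperTrace C Tr)
    (rho : Ordinal → Ordinal → ℤ)
    (hrho : (∃ rho1 : Ordinal → Ordinal → ℕ, IsRho1 C Tr rho1 ∧
              ∀ α β, α < β → β < omega1 → rho α β = rho1 α β) ∨
            (∀ α β, rho α β = rho2 Tr α β)) :
    (∀ α, α < omega1 → ∃ p ∈ treeT rho, p.1 = α) ∧
    (∀ α, α < omega1 → {p ∈ treeT rho | p.1 = α}.Countable) ∧
    ¬∃ c : Set (Ordinal × (Ordinal → ℤ)), c ⊆ treeT rho ∧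
      (∀ p ∈ c, ∀ q ∈ c, treeLE p q ∨ treeLE q p) ∧ ¬c.Countable := by
  obtain ⟨G, hG, hbranch⟩ : ∃ G, TailCoherent rho G ∧ ∀ b, ¬ IsBranch rho b := by
    rcases hrho with ⟨rho1, hrho1, hlink⟩ | hrho2
    · exact ⟨max, hrho1.tailCoherent hC hstar hTr hlink, hrho1.not_isBranch hC hstar hTr hlink⟩
    · obtain rfl : rho = rho2 Tr := funext₂ hrho2
      exact ⟨(· + ·), hTr.tailCoherent_rho2 hC hstar, hTr.not_isBranch_rho2 hC hstar⟩
  refine ⟨fun α hα => ⟨(α, treeNode rho α α), ⟨α, le_rfl, hα, rfl⟩, rfl⟩, fun α hα => ?_, ?_⟩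
  · exact ((hG.countable_image_treeNode hα).image _).mono level_subset_image_treeNode
  · rintro ⟨c, hsub, hchain, hunc⟩
    obtain ⟨b, hb⟩ := exists_isBranch_of_chain hsub hchain hunc
    exact hbranch b hb
end
end
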